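/- arXiv:1910.07985 — 8 statements merged into one kernel-verified Lean document; each statement's English description precedes it below -/
import Mathlib

section
/- Let φ be an automorphism of an atomless probability measure algebra A with nontrivial support (i.e., it is not the identity almost everywhere). Then there exists a nonzero element b of A such that φ(b) ∧ b = 0. -/
open scoped symmDiff

/-! For `b = a \ φ a` the image `φ b ≤ φ a` is disjoint from `b`. If `b` were `⊥`, then
`a ≤ φ a` with `μ (φ a) = μ a`, so `φ a \ a` is null, hence `⊥` because `μ` induces a metric,
and `φ a = a`. -/

section MeasureAlgebra

variable {A : Type*} [BooleanAlgebra A]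

lemma eq_bot_of_measure_eq_zero [MetricSpace A] {μ : A → ℝ}
    (hdist : ∀ a b : A, dist a b = μ (a ∆ b)) {x : A} (hx : μ x = 0) : x = ⊥ :=
  dist_eq_zero.mp (by rw [hdist, symmDiff_bot, hx])

lemma eq_of_le_of_measure_eq {μ : A → ℝ}
    (hadd : ∀ a b : A, a ⊓ b = ⊥ → μ (a ⊔ b) = μ a + μ b)
    (hnull : ∀ x : A, μ x = 0 → x = ⊥) {a c : A} (hac : a ≤ c) (hμ : μ c = μ a) : a = c := by
  have hsplit : μ c = μ a + μ (c \ a) := by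
    rw [← hadd _ _ disjoint_sdiff_self_right.eq_bot, sup_sdiff_cancel_right hac]
  have hdiff : c \ a = ⊥ := hnull _ (by linarith)
  exact le_antisymm hac (sdiff_eq_bot_iff.mp hdiff)

lemma sdiff_map_ne_bot {μ : A → ℝ}
    (hadd : ∀ a b : A, a ⊓ b = ⊥ → μ (a ⊔ b) = μ a + μ b)
    (hnull : ∀ x : A, μ x = 0 → x = ⊥) {f : A → A} {a : A} (hμ : μ (f a) = μ a)
    (ha : f a ≠ a) : a \ f a ≠ ⊥ := fun h =>
  ha (eq_of_le_of_measure_eq hadd hnull (sdiff_eq_bot_iff.mp h) hμ).symm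

lemma disjoint_map_sdiff_map {f : A → A} (hf : Monotone f) (a : A) :
    Disjoint (f (a \ f a)) (a \ f a) :=
  disjoint_sdiff_self_right.mono_left (hf sdiff_le)

end MeasureAlgebra

theorem stmt0_general {A : Type*} [BooleanAlgebra A] [MetricSpace A]
    (μ : A → ℝ)
    (hadd : ∀ a b : A, a ⊓ b = ⊥ → μ (a ⊔ b) = μ a + μ b)
    (hdist : ∀ a b : A, dist a b = μ (a ∆ b))
    (φ : A ≃o A) (hpres : ∀ a : A, μ (φ a) = μ a)
    (hsupp : ∃ a : A, φ a ≠ a) :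
    ∃ b : A, b ≠ ⊥ ∧ φ b ⊓ b = ⊥ := by
  obtain ⟨a, ha⟩ := hsupp
  exact ⟨a \ φ a,
    sdiff_map_ne_bot hadd (fun _ => eq_bot_of_measure_eq_zero hdist) (hpres a) ha,
    (disjoint_map_sdiff_map φ.monotone a).eq_bot⟩

/-- Let `φ` be an automorphism of an atomless probability measure algebra
`A` with nontrivial support (i.e. it is not the identity). Then there exists a nonzero
`b ∈ A` with `φ b ⊓ b = ⊥`. A measure algebra is a Boolean algebra with a finitely
additive probability `μ` such that `d(a,b) = μ (a ∆ b)` is a complete metric. -/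
theorem stmt0 {A : Type*} [BooleanAlgebra A] [MetricSpace A] [CompleteSpace A]
    (μ : A → ℝ) (hμ1 : μ ⊤ = 1) (hμ0 : ∀ a : A, 0 ≤ μ a)
    (hadd : ∀ a b : A, a ⊓ b = ⊥ → μ (a ⊔ b) = μ a + μ b)
    (hdist : ∀ a b : A, dist a b = μ (a ∆ b))
    (hatomless : ∀ a : A, ¬ IsAtom a)
    (φ : A ≃o A) (hpres : ∀ a : A, μ (φ a) = μ a)
    (hsupp : ∃ a : A, φ a ≠ a) :
    ∃ b : A, b ≠ ⊥ ∧ φ b ⊓ b = ⊥ :=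
  stmt0_general μ hadd hdist φ hpres hsupp
end

section
/- Let φ be a measure-preserving automorphism of an atomless probability measure algebra A. Then there exists a₀ ∈ A with a₀ ∧ φ(a₀) = 0 such that supp φ = φ⁻¹(a₀) ∨ a₀ ∨ φ(a₀). -/
/-!
For the metric `dist a b = μ (a ∆ b)`, the operations `⊓` and `φ` are continuous, so
`D = {x | Disjoint x (φ x)}` is closed. A greedy sequence in `D`, each term nearly maximizing `μ`
above the previous one, is increasing, hence Cauchy, and its limit `a₀` is a maximal element of
`D`. Every `a` in the set of the statement contains every `x ∈ D`, since `x ⊓ aᶜ` is fixed by `φ`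
and hence lies below `x ⊓ φ x = ⊥`; in particular `a` contains `φ⁻¹ a₀`, `a₀` and `φ a₀`.
Conversely, if some `b` disjoint from these three were moved by `φ`, then `d = b \ φ b` would be
nonzero (as `φ` preserves `μ`) and disjoint from `φ d`, and `a₀ ⊔ d ∈ D` would contradict the
maximality of `a₀`.
-/

open scoped symmDiff

structure IsMeasureMetric {A : Type*} [BooleanAlgebra A] [MetricSpace A] (μ : A → ℝ) :
    Prop where
  add_of_inf_eq_bot : ∀ a b : A, a ⊓ b = ⊥ → μ (a ⊔ b) = μ a + μ b
  dist_eq : ∀ a b : A, dist a b = μ (a ∆ b)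

namespace IsMeasureMetric

variable {A : Type*} [BooleanAlgebra A] [MetricSpace A] {μ : A → ℝ}

theorem eq_dist_bot (hμ : IsMeasureMetric μ) (a : A) : μ a = dist a ⊥ := by
  rw [hμ.dist_eq, symmDiff_bot]

theorem nonneg (hμ : IsMeasureMetric μ) (a : A) : 0 ≤ μ a :=
  hμ.eq_dist_bot a ▸ dist_nonneg

theorem eq_add_sdiff (hμ : IsMeasureMetric μ) {a b : A} (hab : a ≤ b) :
    μ b = μ a + μ (b \ a) := by
  rw [← hμ.add_of_inf_eq_bot a (b \ a) inf_sdiff_self_right, sup_sdiff_cancel_right hab]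

theorem mono (hμ : IsMeasureMetric μ) : Monotone μ := fun a b hab => by
  linarith [hμ.eq_add_sdiff hab, hμ.nonneg (b \ a)]

theorem dist_of_le (hμ : IsMeasureMetric μ) {a b : A} (hab : a ≤ b) :
    dist a b = μ b - μ a := by
  rw [hμ.dist_eq, symmDiff_of_le hab, hμ.eq_add_sdiff hab]
  ring

theorem eq_of_le_of_apply_le (hμ : IsMeasureMetric μ) {a b : A} (hab : a ≤ b)
    (hba : μ b ≤ μ a) : a = b := by
  have : dist a b = 0 := le_antisymm (by linarith [hμ.dist_of_le hab]) dist_nonneg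
  exact dist_eq_zero.mp this

theorem dist_inf_right_le (hμ : IsMeasureMetric μ) (a b c : A) :
    dist (a ⊓ c) (b ⊓ c) ≤ dist a b := by
  rw [hμ.dist_eq, hμ.dist_eq, ← inf_symmDiff_distrib_right]
  exact hμ.mono inf_le_left

theorem dist_inf_inf_le (hμ : IsMeasureMetric μ) (a b c d : A) :
    dist (a ⊓ c) (b ⊓ d) ≤ dist a b + dist c d :=
  calc dist (a ⊓ c) (b ⊓ d) ≤ dist (a ⊓ c) (b ⊓ c) + dist (c ⊓ b) (d ⊓ b) := by
        rw [inf_comm c, inf_comm d]; exact dist_triangle _ _ _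
    _ ≤ dist a b + dist c d :=
      add_le_add (hμ.dist_inf_right_le a b c) (hμ.dist_inf_right_le c d b)

theorem continuousInf (hμ : IsMeasureMetric μ) : ContinuousInf A where
  continuous_inf := (LipschitzWith.of_dist_le_mul (K := 2) fun p q => by
    have := hμ.dist_inf_inf_le p.1 q.1 p.2 q.2
    rw [Prod.dist_eq]
    push_cast
    linarith [le_max_left (dist p.1 q.1) (dist p.2 q.2),
      le_max_right (dist p.1 q.1) (dist p.2 q.2)]).continuous

theorem isometry_of_apply_map_eq (hμ : IsMeasureMetric μ) (φ : A ≃o A)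
    (hφ : ∀ a, μ (φ a) = μ a) : Isometry φ :=
  Isometry.of_dist_eq fun a b => by rw [hμ.dist_eq, hμ.dist_eq, ← map_symmDiff', hφ]

theorem cauchySeq_of_monotone (hμ : IsMeasureMetric μ) {f : ℕ → A} (hf : Monotone f) :
    CauchySeq f := by
  have hμf : CauchySeq (μ ∘ f) :=
    (tendsto_atTop_ciSup (hμ.mono.comp hf)
      ⟨μ ⊤, Set.forall_mem_range.2 fun n => hμ.mono le_top⟩).cauchySeq
  refine Metric.cauchySeq_iff'.2 fun ε hε => ?_
  obtain ⟨N, hN⟩ := Metric.cauchySeq_iff'.1 hμf ε hε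
  refine ⟨N, fun n hn => ?_⟩
  rw [dist_comm, hμ.dist_of_le (hf hn)]
  simpa [Real.dist_eq, abs_of_nonneg (sub_nonneg.2 (hμ.mono (hf hn)))] using hN n hn

theorem isClosed_setOf_le (hμ : IsMeasureMetric μ) (a : A) : IsClosed {x | a ≤ x} := by
  have := hμ.continuousInf
  simp_rw [← inf_eq_left (a := a)]
  exact isClosed_eq (continuous_const.inf continuous_id) continuous_const

theorem exists_le_forall_lt_add (hμ : IsMeasureMetric μ) {S : Set A} {a : A} (ha : a ∈ S) {ε : ℝ}
    (hε : 0 < ε) : ∃ b ∈ S, a ≤ b ∧ ∀ c ∈ S, b ≤ c → μ c < μ b + ε := by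
  set T := μ '' {c ∈ S | a ≤ c}
  have hT : BddAbove T := ⟨μ ⊤, Set.forall_mem_image.2 fun c _ => hμ.mono le_top⟩
  obtain ⟨-, ⟨b, ⟨hbS, hab⟩, rfl⟩, hb⟩ :=
    exists_lt_of_lt_csSup (show T.Nonempty from ⟨μ a, a, ⟨ha, le_rfl⟩, rfl⟩)
      (sub_lt_self (sSup T) hε)
  refine ⟨b, hbS, hab, fun c hcS hbc => ?_⟩
  have : μ c ≤ sSup T := le_csSup hT ⟨c, ⟨hcS, hab.trans hbc⟩, rfl⟩
  linarith

theorem exists_le_maximal_of_isClosed [CompleteSpace A] (hμ : IsMeasureMetric μ) {S : Set A}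
    (hS : IsClosed S) {a : A} (ha : a ∈ S) : ∃ m, a ≤ m ∧ Maximal (· ∈ S) m := by
  choose! next hnextS hle hnext using fun (x : A) (hx : x ∈ S) (n : ℕ) =>
    hμ.exists_le_forall_lt_add hx (pow_pos (one_half_pos (α := ℝ)) n)
  let f : ℕ → A := fun n => Nat.rec a (fun k x => next x k) n
  have hfS : ∀ n, f n ∈ S := fun n => Nat.rec ha (fun k hk => hnextS _ hk k) n
  have hf : Monotone f := monotone_nat_of_le_succ fun n => hle _ (hfS n) n
  obtain ⟨m, hm⟩ := cauchySeq_tendsto_of_complete (hμ.cauchySeq_of_monotone hf)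
  have hfm : ∀ n, f n ≤ m := fun n => (hμ.isClosed_setOf_le (f n)).mem_of_tendsto hm
    ((Filter.eventually_ge_atTop n).mono fun k hk => hf hk)
  refine ⟨m, hfm 0, hS.mem_of_tendsto hm (.of_forall hfS), fun c hcS hmc => ?_⟩
  refine (hμ.eq_of_le_of_apply_le hmc (le_of_forall_pos_lt_add fun ε hε => ?_)).ge
  obtain ⟨n, hn⟩ := exists_pow_lt_of_lt_one hε one_half_lt_one
  calc μ c < μ (f (n + 1)) + (1 / 2) ^ n :=
        hnext _ (hfS n) n c hcS ((hfm (n + 1)).trans hmc)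
    _ ≤ μ m + ε := add_le_add (hμ.mono (hfm (n + 1))) hn.le

theorem exists_disjoint_map_of_map_ne (hμ : IsMeasureMetric μ) {φ : A ≃o A}
    (hφ : ∀ a, μ (φ a) = μ a) {b : A} (hb : φ b ≠ b) : ∃ d ≤ b, d ≠ ⊥ ∧ Disjoint d (φ d) := by
  refine ⟨b \ φ b, sdiff_le, fun h => hb ?_,
    disjoint_sdiff_self_left.mono_right (φ.monotone sdiff_le)⟩
  exact (hμ.eq_of_le_of_apply_le (sdiff_eq_bot_iff.1 h) (hφ b).le).symm

end IsMeasureMetric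

section Automorphism

variable {A : Type*} [BooleanAlgebra A] {φ : A ≃o A} {a x d : A}

theorem le_of_disjoint_map (ha : ∀ b ≤ aᶜ, φ b = b) (hx : Disjoint x (φ x)) : x ≤ a := by
  have hfix := ha (x ⊓ aᶜ) inf_le_right
  refine disjoint_compl_right_iff.1 (disjoint_iff_inf_le.2 (le_trans ?_ hx.le_bot))
  exact le_inf inf_le_left (hfix.symm.le.trans (φ.monotone inf_le_left))

theorem disjoint_sup_map_sup (hx : Disjoint x (φ x)) (hd : Disjoint d (φ d))
    (hdx : Disjoint d (φ x)) (hdx' : Disjoint d (φ.symm x)) : Disjoint (x ⊔ d) (φ (x ⊔ d)) := by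
  rw [map_sup, disjoint_sup_left, disjoint_sup_right, disjoint_sup_right]
  refine ⟨⟨hx, ?_⟩, hdx, hd⟩
  simpa using (hdx'.map_orderIso φ).symm

theorem map_eq_self_of_le_compl (hmax : Maximal (fun y => Disjoint y (φ y)) x)
    (hφ : ∀ b, φ b ≠ b → ∃ d ≤ b, d ≠ ⊥ ∧ Disjoint d (φ d)) :
    ∀ b ≤ (φ.symm x ⊔ x ⊔ φ x)ᶜ, φ b = b := by
  intro b hb
  by_contra hne
  obtain ⟨d, hdb, hd0, hd⟩ := hφ b hne
  obtain ⟨⟨hdx', hdx⟩, hdφx⟩ := by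
    simpa only [disjoint_sup_right] using le_compl_iff_disjoint_right.1 (hdb.trans hb)
  have hxd : x ⊔ d ≤ x := hmax.2 (disjoint_sup_map_sup hmax.1 hd hdφx hdx') le_sup_left
  exact hd0 (hdx.eq_bot_of_le (le_sup_right.trans hxd))

theorem isGLB_of_maximal_disjoint_map (hmax : Maximal (fun y => Disjoint y (φ y)) x)
    (hφ : ∀ b, φ b ≠ b → ∃ d ≤ b, d ≠ ⊥ ∧ Disjoint d (φ d)) :
    IsGLB {a : A | ∀ b ≤ aᶜ, φ b = b} (φ.symm x ⊔ x ⊔ φ x) := by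
  refine ⟨fun a ha => sup_le (sup_le ?_ (le_of_disjoint_map ha hmax.1)) ?_,
    fun l hl => hl (map_eq_self_of_le_compl hmax hφ)⟩
  · exact le_of_disjoint_map ha (by simpa using hmax.1.map_orderIso φ.symm)
  · exact le_of_disjoint_map ha (hmax.1.map_orderIso φ)

end Automorphism

theorem stmt1_general {A : Type*} [BooleanAlgebra A] [MetricSpace A] [CompleteSpace A]
    (μ : A → ℝ)
    (hadd : ∀ a b : A, a ⊓ b = ⊥ → μ (a ⊔ b) = μ a + μ b)
    (hdist : ∀ a b : A, dist a b = μ (a ∆ b))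
    (φ : A ≃o A) (hpres : ∀ a : A, μ (φ a) = μ a) :
    ∃ a₀ : A, a₀ ⊓ φ a₀ = ⊥ ∧
      IsGLB {a : A | ∀ b ≤ aᶜ, φ b = b} (φ.symm a₀ ⊔ a₀ ⊔ φ a₀) := by
  have hμ : IsMeasureMetric μ := ⟨hadd, hdist⟩
  have := hμ.continuousInf
  have hD : IsClosed {x | Disjoint x (φ x)} := by
    simp_rw [disjoint_iff]
    exact isClosed_eq (continuous_id.inf (hμ.isometry_of_apply_map_eq φ hpres).continuous)
      continuous_const
  obtain ⟨a₀, -, hmax⟩ := hμ.exists_le_maximal_of_isClosed hD (disjoint_bot_left (a := φ ⊥))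
  exact ⟨a₀, disjoint_iff.1 hmax.1,
    isGLB_of_maximal_disjoint_map hmax fun b hb => hμ.exists_disjoint_map_of_map_ne hpres hb⟩

/-- Let `φ` be a measure-preserving automorphism of a (separable) atomless
probability measure algebra `A`. Then there is `a₀ ∈ A` with `a₀ ⊓ φ a₀ = ⊥` such that
`supp φ = φ⁻¹ a₀ ⊔ a₀ ⊔ φ a₀`, where `supp φ` is the infimum of the set
`{a : ∀ b ≤ ¬ a, φ b = b}` (expressed here via `IsGLB`). -/
theorem stmt1 {A : Type*} [BooleanAlgebra A] [MetricSpace A] [CompleteSpace A]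
    [TopologicalSpace.SeparableSpace A]
    (μ : A → ℝ) (hμ1 : μ ⊤ = 1) (hμ0 : ∀ a : A, 0 ≤ μ a)
    (hadd : ∀ a b : A, a ⊓ b = ⊥ → μ (a ⊔ b) = μ a + μ b)
    (hdist : ∀ a b : A, dist a b = μ (a ∆ b))
    (hatomless : ∀ a : A, ¬ IsAtom a)
    (φ : A ≃o A) (hpres : ∀ a : A, μ (φ a) = μ a) :
    ∃ a₀ : A, a₀ ⊓ φ a₀ = ⊥ ∧
      IsGLB {a : A | ∀ b ≤ aᶜ, φ b = b} (φ.symm a₀ ⊔ a₀ ⊔ φ a₀) :=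
  stmt1_general μ hadd hdist φ hpres
end

section
/- Let φ be a measure-preserving automorphism of an atomless probability measure algebra A. Then supp φ = ⋁{φ⁻¹(a) ∨ a ∨ φ(a) : a ∈ A, a ∧ φ(a) = 0}. -/
/-!
If `φ` fixes everything below `tᶜ` and `a` is disjoint from `φ a`, then the part of `a`
outside `t` is fixed, hence lies in `a ⊓ φ a = ⊥`; as `φ a` and `φ⁻¹ a` are again disjoint
from their images, the whole triple lies below `t`. Conversely, if `b` lies outside an upper
bound `u` of the triples, then `b \ φ b` and `b \ φ⁻¹ b` are disjoint from their images under
`φ` resp. `φ⁻¹`, so they lie below `u` and vanish; thus `b ≤ φ b` and `b ≤ φ⁻¹ b`,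
i.e. `φ b = b`.
-/

namespace OrderIso

variable {A : Type*} [BooleanAlgebra A] (φ : A ≃o A) {a b t u : A}

theorem le_of_disjoint_apply_self (ht : ∀ b ≤ tᶜ, φ b = b) (ha : Disjoint a (φ a)) :
    a ≤ t :=
  disjoint_compl_right_iff.1 fun x hxa hxt => ha hxa ((ht x hxt).symm.trans_le (φ.monotone hxa))

theorem disjoint_apply_apply_self (ha : Disjoint a (φ a)) : Disjoint (φ a) (φ (φ a)) :=
  (disjoint_map_orderIso_iff φ).2 ha

theorem disjoint_symm_apply_self (ha : Disjoint a (φ a)) :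
    Disjoint (φ.symm a) (φ (φ.symm a)) := by
  rw [φ.apply_symm_apply, ← disjoint_map_orderIso_iff φ, φ.apply_symm_apply]
  exact ha

theorem symm_apply_sup_sup_apply_le (ht : ∀ b ≤ tᶜ, φ b = b) (ha : Disjoint a (φ a)) :
    φ.symm a ⊔ a ⊔ φ a ≤ t :=
  sup_le (sup_le (φ.le_of_disjoint_apply_self ht (φ.disjoint_symm_apply_self ha))
    (φ.le_of_disjoint_apply_self ht ha))
    (φ.le_of_disjoint_apply_self ht (φ.disjoint_apply_apply_self ha))

theorem le_apply_of_le_compl (hu : ∀ a, Disjoint a (φ a) → a ≤ u) (hb : b ≤ uᶜ) :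
    b ≤ φ b := by
  have hdisj : Disjoint (b \ φ b) (φ (b \ φ b)) :=
    disjoint_sdiff_self_left.mono_right (φ.monotone sdiff_le)
  have hbot : b \ φ b ≤ ⊥ := disjoint_compl_right (hu _ hdisj) (sdiff_le.trans hb)
  exact sdiff_eq_bot_iff.1 (le_bot_iff.1 hbot)

theorem apply_eq_self_of_le_compl (hu : ∀ a, Disjoint a (φ a) → φ.symm a ⊔ a ⊔ φ a ≤ u)
    (hb : b ≤ uᶜ) : φ b = b := by
  have hφ : ∀ a, Disjoint a (φ a) → a ≤ u := fun a ha =>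
    le_sup_right.trans (le_sup_left.trans (hu a ha))
  have hφsymm : ∀ a, Disjoint a (φ.symm a) → a ≤ u := fun a ha => by
    have ha' : Disjoint (φ.symm a) (φ (φ.symm a)) := by rw [φ.apply_symm_apply]; exact ha.symm
    exact (φ.apply_symm_apply a).symm.trans_le (le_sup_right.trans (hu _ ha'))
  exact le_antisymm (φ.le_symm_apply.1 (φ.symm.le_apply_of_le_compl hφsymm hb))
    (φ.le_apply_of_le_compl hφ hb)

end OrderIso

open scoped symmDiff

theorem stmt2_general {A : Type*} [BooleanAlgebra A]
    (φ : A ≃o A)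
    (s : A) (hs : IsGLB {a : A | ∀ b ≤ aᶜ, φ b = b} s) :
    IsLUB {c : A | ∃ a : A, a ⊓ φ a = ⊥ ∧ c = φ.symm a ⊔ a ⊔ φ a} s := by
  constructor
  · rintro _ ⟨a, ha, rfl⟩
    exact hs.2 fun t ht => φ.symm_apply_sup_sup_apply_le ht (disjoint_iff.2 ha)
  · intro u hu
    exact hs.1 fun b =>
      φ.apply_eq_self_of_le_compl fun a ha => hu ⟨a, disjoint_iff.1 ha, rfl⟩

/-- Let `φ` be a measure-preserving automorphism of a (separable) atomless
probability measure algebra `A`. Then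
`supp φ = ⋁ {φ⁻¹ a ⊔ a ⊔ φ a : a ⊓ φ a = ⊥}`, where `supp φ` is the infimum of
`{a : ∀ b ≤ ¬ a, φ b = b}` (infima and suprema expressed via `IsGLB`/`IsLUB`). -/
theorem stmt2 {A : Type*} [BooleanAlgebra A] [MetricSpace A] [CompleteSpace A]
    [TopologicalSpace.SeparableSpace A]
    (μ : A → ℝ) (hμ1 : μ ⊤ = 1) (hμ0 : ∀ a : A, 0 ≤ μ a)
    (hadd : ∀ a b : A, a ⊓ b = ⊥ → μ (a ⊔ b) = μ a + μ b)
    (hdist : ∀ a b : A, dist a b = μ (a ∆ b))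
    (hatomless : ∀ a : A, ¬ IsAtom a)
    (φ : A ≃o A) (hpres : ∀ a : A, μ (φ a) = μ a)
    (s : A) (hs : IsGLB {a : A | ∀ b ≤ aᶜ, φ b = b} s) :
    IsLUB {c : A | ∃ a : A, a ⊓ φ a = ⊥ ∧ c = φ.symm a ⊔ a ⊔ φ a} s :=
  stmt2_general φ s hs
end

section
/- If f is a measure-preserving bimeasurable bijection of a standard probability space (X,μ) and φ is the induced automorphism of the measure algebra MAlg(X,μ), then the class of the pointwise support {x ∈ X : f(x) ≠ x} in MAlg(X,μ) equals the measure-algebra support of φ. -/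
/-!
The support `{x | f x ≠ x}` lies below every `a` outside of which `f` essentially fixes all sets:
for each set `s` of a countable separating family, `f` essentially fixes `s \ a` and `sᶜ \ a`,
so almost every `x ∉ a` satisfies `f x ∈ s ↔ x ∈ s` for all such `s`, hence `f x = x`.
Conversely the support is itself such an `a`: a set `b` essentially disjoint from it satisfies
`b ⊆ f ⁻¹' b` almost everywhere, and since `f` preserves the finite measure `μ`, the two sets
have the same measure and so agree almost everywhere.
-/

open MeasureTheory Set

section

variable {X : Type*} [MeasurableSpace X] {μ : Measure X} {f : X → X}

theorem measure_setOf_ne_diff_eq_zero [MeasurableSpace.CountablySeparated X] {a : Set X}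
    (ha : MeasurableSet a)
    (h : ∀ b : Set X, MeasurableSet b → μ (b ∩ a) = 0 → f ⁻¹' b =ᵐ[μ] b) :
    μ ({x | f x ≠ x} \ a) = 0 := by
  obtain ⟨S, hSc, hSm, hSsep⟩ := exists_countable_separating X MeasurableSet univ
  have hS : ∀ s ∈ S, ∀ᵐ x ∂μ, x ∉ a → (f x ∈ s ↔ x ∈ s) := by
    intro s hs
    have hin := (h (s \ a) ((hSm s hs).diff ha) (by simp)).mem_iff
    have hout := (h (sᶜ \ a) ((hSm s hs).compl.diff ha) (by simp)).mem_iff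
    filter_upwards [hin, hout] with x hin hout hxa
    simp only [mem_preimage, mem_sdiff, mem_compl_iff] at hin hout
    tauto
  have hfix : ∀ᵐ x ∂μ, x ∉ a → f x = x := by
    filter_upwards [(ae_ball_iff hSc).2 hS] with x hx hxa
    exact hSsep (f x) (mem_univ _) x (mem_univ _) fun s hs => hx s hs hxa
  refine measure_mono_null ?_ (ae_iff.1 hfix)
  rintro x ⟨hne, hxa⟩ hx
  exact hne (hx hxa)

theorem MeasureTheory.MeasurePreserving.preimage_ae_eq_of_measure_inter_setOf_ne
    [IsFiniteMeasure μ] (hf : MeasurePreserving f μ μ) {b : Set X} (hb : MeasurableSet b)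
    (h : μ (b ∩ {x | f x ≠ x}) = 0) : f ⁻¹' b =ᵐ[μ] b := by
  have hsub : b ≤ᵐ[μ] f ⁻¹' b := by
    filter_upwards [measure_eq_zero_iff_ae_notMem.1 h] with x hx (hxb : x ∈ b)
    by_contra hfx
    exact hx ⟨hxb, fun hfix => hfx (show f x ∈ b by rwa [hfix])⟩
  exact (ae_eq_of_ae_subset_of_measure_ge hsub (hf.measure_preimage hb.nullMeasurableSet).le
    hb.nullMeasurableSet (measure_ne_top μ _)).symm

end

/-- If `f` is a measure-preserving bimeasurable bijection of a standard
probability space `(X,μ)`, then the class of `{x | f x ≠ x}` in the measure algebra is the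
measure-algebra support of the induced automorphism, i.e. it is the greatest lower bound
(modulo null sets) of the family of (classes of) sets `a` such that every measurable `b`
essentially below `¬ a` is essentially fixed by `f`. -/
theorem stmt3 {X : Type*} [MeasurableSpace X] [StandardBorelSpace X]
    (μ : Measure X) [IsProbabilityMeasure μ]
    (f : X ≃ᵐ X) (hf : MeasurePreserving f μ μ) :
    (∀ a : Set X, MeasurableSet a →
        (∀ b : Set X, MeasurableSet b → μ (b ∩ a) = 0 → f ⁻¹' b =ᵐ[μ] b) →
        μ ({x | f x ≠ x} \ a) = 0) ∧
    (∀ c : Set X, MeasurableSet c →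
        (∀ a : Set X, MeasurableSet a →
          (∀ b : Set X, MeasurableSet b → μ (b ∩ a) = 0 → f ⁻¹' b =ᵐ[μ] b) →
          μ (c \ a) = 0) →
        μ (c \ {x | f x ≠ x}) = 0) := by
  refine ⟨fun a ha h => measure_setOf_ne_diff_eq_zero ha h, fun c _ hc => ?_⟩
  exact hc _ (measurableSet_eq_fun f.measurable measurable_id).compl fun b hb =>
    hf.preimage_ae_eq_of_measure_inter_setOf_ne hb
end

section
/- Let Γ be a countable group, and let α, β be probability-measure-preserving actions of Γ on standard probability spaces (X,μ) and (Y,ν) with the same invariant random subgroup (Stab^α_*μ = Stab^β_*ν). If π : Y → X is a factor map from β to α (i.e., π is measure-preserving and π(γ·y) = γ·π(y) for all γ and almost all y), then for almost every y ∈ Y, Stab^α(π(y)) = Stab^β(y). -/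
/-
The stabilizer of `π y` contains that of `y`, and both stabilizer maps have the law of the IRS,
so for each `γ` the event `γ ∈ Stab (π y)` contains the event `γ ∈ Stab y` up to a null set and has
the same measure; as `ν` is finite the two events agree a.e., and countability of `Γ` lets one
intersect over all `γ`.
-/

open MeasureTheory

/-- The space of subgroups of `Γ`, with the Borel structure inherited from `{0,1}^Γ`. -/
instance subgroupMeasurableSpace (Γ : Type*) [Group Γ] : MeasurableSpace (Subgroup Γ) :=
  MeasurableSpace.comap (fun (H : Subgroup Γ) (g : Γ) => (g ∈ H : Prop)) inferInstance

lemma measurableSet_setOf_mem_subgroup {Γ : Type*} [Group Γ] (γ : Γ) :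
    MeasurableSet {H : Subgroup Γ | γ ∈ H} :=
  measurableSet_setOfPred.2 ((measurable_pi_apply γ).comp (comap_measurable _))

lemma MulAction.stabilizer_le_stabilizer_of_map_smul {Γ X Y : Type*} [Group Γ]
    [MulAction Γ X] [MulAction Γ Y] {π : Y → X} {y : Y} (h : ∀ γ : Γ, π (γ • y) = γ • π y) :
    MulAction.stabilizer Γ y ≤ MulAction.stabilizer Γ (π y) := fun γ (hγ : γ • y = y) =>
  show γ • π y = π y by rw [← h γ, hγ]

lemma ae_eq_of_ae_le_of_map_eq {Γ Y : Type*} [Group Γ] [Countable Γ] [MeasurableSpace Y]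
    {ν : Measure Y} [IsFiniteMeasure ν] {f g : Y → Subgroup Γ}
    (hf : Measurable f) (hg : Measurable g) (hle : ∀ᵐ y ∂ν, g y ≤ f y)
    (hmap : ν.map f = ν.map g) : f =ᵐ[ν] g := by
  have hmem : ∀ γ : Γ, ∀ᵐ y ∂ν, (γ ∈ g y ↔ γ ∈ f y) := by
    intro γ
    have hS := measurableSet_setOf_mem_subgroup γ
    have hsub : g ⁻¹' {H | γ ∈ H} ≤ᵐ[ν] f ⁻¹' {H | γ ∈ H} := by
      filter_upwards [hle] with y hy using fun hγ => hy hγ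
    have hmeasure : ν (f ⁻¹' {H | γ ∈ H}) = ν (g ⁻¹' {H | γ ∈ H}) := by
      rw [← Measure.map_apply hf hS, ← Measure.map_apply hg hS, hmap]
    exact (ae_eq_of_ae_subset_of_measure_ge hsub hmeasure.le (hg hS).nullMeasurableSet
      (measure_ne_top ν _)).mem_iff
  filter_upwards [ae_all_iff.2 hmem] with y hy
  ext γ
  exact (hy γ).symm

theorem stmt5_general {Γ X Y : Type*} [Group Γ] [Countable Γ]
    [MeasurableSpace X] [MeasurableSpace Y]
    [MulAction Γ X] [MulAction Γ Y]
    (μ : Measure X) (ν : Measure Y) [IsProbabilityMeasure ν]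
    (hmX : Measurable (fun x : X => MulAction.stabilizer Γ x))
    (hmY : Measurable (fun y : Y => MulAction.stabilizer Γ y))
    (π : Y → X) (hπ : MeasurePreserving π ν μ)
    (hequiv : ∀ᵐ y ∂ν, ∀ γ : Γ, π (γ • y) = γ • π y)
    (hirs : Measure.map (fun x : X => MulAction.stabilizer Γ x) μ
          = Measure.map (fun y : Y => MulAction.stabilizer Γ y) ν) :
    ∀ᵐ y ∂ν, MulAction.stabilizer Γ (π y) = MulAction.stabilizer Γ y := by
  have hle : ∀ᵐ y ∂ν, MulAction.stabilizer Γ y ≤ MulAction.stabilizer Γ (π y) := by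
    filter_upwards [hequiv] with y hy
      using MulAction.stabilizer_le_stabilizer_of_map_smul hy
  have hmap : ν.map (fun y => MulAction.stabilizer Γ (π y))
      = ν.map (fun y => MulAction.stabilizer Γ y) := by
    rw [← hirs, ← hπ.map_eq, Measure.map_map hmX hπ.measurable]
    rfl
  exact ae_eq_of_ae_le_of_map_eq (hmX.comp hπ.measurable) hmY hle hmap

/-- If `α` and `β` are pmp actions of a countable group `Γ` on standard
probability spaces `(X,μ)` and `(Y,ν)` with the same invariant random subgroup, and
`π : Y → X` is a factor map from `β` to `α`, then for almost every `y`,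
`Stab (π y) = Stab y`. -/
theorem stmt5 {Γ X Y : Type*} [Group Γ] [Countable Γ]
    [MeasurableSpace X] [StandardBorelSpace X] [MeasurableSpace Y] [StandardBorelSpace Y]
    [MulAction Γ X] [MulAction Γ Y]
    (μ : Measure X) (ν : Measure Y) [IsProbabilityMeasure μ] [IsProbabilityMeasure ν]
    (hα : ∀ γ : Γ, MeasurePreserving (fun x : X => γ • x) μ μ)
    (hβ : ∀ γ : Γ, MeasurePreserving (fun y : Y => γ • y) ν ν)
    (hmX : Measurable (fun x : X => MulAction.stabilizer Γ x))
    (hmY : Measurable (fun y : Y => MulAction.stabilizer Γ y))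
    (π : Y → X) (hπ : MeasurePreserving π ν μ)
    (hequiv : ∀ᵐ y ∂ν, ∀ γ : Γ, π (γ • y) = γ • π y)
    (hirs : Measure.map (fun x : X => MulAction.stabilizer Γ x) μ
          = Measure.map (fun y : Y => MulAction.stabilizer Γ y) ν) :
    ∀ᵐ y ∂ν, MulAction.stabilizer Γ (π y) = MulAction.stabilizer Γ y :=
  stmt5_general μ ν hmX hmY π hπ hequiv hirs
end

section
/- Let Γ be a countable group and let Γ act measure-preservingly on a standard probability space (X,μ). The action is hyperfinite if and only if for every finite symmetric S ⊆ Γ, the Schreier graphing G_{α,S} is hyperfinite as a graphing (i.e., for every ε > 0 one can remove a Borel set of edges of edge-measure less than ε so that all remaining components have size at most some finite M). -/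
open MeasureTheory
open scoped ENNReal Pointwise

/-- The edge measure of a set `Z` of (ordered) edges. -/
noncomputable def edgeMeasure {X : Type*} [MeasurableSpace X] (μ : Measure X)
    (Z : Set (X × X)) : ℝ≥0∞ :=
  ∫⁻ x, (∑' _ : {y : X // (x, y) ∈ Z}, (1 : ℝ≥0∞)) ∂μ

/-- Connectivity relation generated by an edge set. -/
def componentRel {X : Type*} (E : Set (X × X)) : X → X → Prop :=
  Relation.ReflTransGen (fun x y => (x, y) ∈ E)

/-- A graphing with edge set `E` is hyperfinite if for every `ε > 0` one can remove a Borel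
symmetric set `Z` of edges with `μ_E(Z) < ε` so that all remaining connected components are
finite of size at most some `M`. -/
def HyperfiniteGraphing {X : Type*} [MeasurableSpace X] (μ : Measure X)
    (E : Set (X × X)) : Prop :=
  ∀ ε : ℝ, 0 < ε → ∃ (M : ℕ) (Z : Set (X × X)), Z ⊆ E ∧ MeasurableSet Z ∧
    (∀ p ∈ Z, (Prod.snd p, Prod.fst p) ∈ Z) ∧
    edgeMeasure μ Z < ENNReal.ofReal ε ∧
    ∀ x : X, {y : X | componentRel (E \ Z) x y}.Finite ∧
      Set.ncard {y : X | componentRel (E \ Z) x y} ≤ M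

/-- The (ordered-pair) edge set of the Schreier graph of the action of `Γ` on `X` relative
to `S ⊆ Γ`: `(x,y)` is an edge iff `x ≠ y` and `y = s • x` for some `s ∈ S`. -/
def schreierEdges (Γ : Type*) {X : Type*} [Group Γ] [MulAction Γ X] (S : Set Γ) :
    Set (X × X) :=
  {p | p.1 ≠ p.2 ∧ ∃ s ∈ S, p.2 = s • p.1}

/-- A pmp action of `Γ` on `(X,μ)` is hyperfinite if for every finite `S ⊆ Γ` and `ε > 0`
there is a finite group `G` acting on `(X,μ)` by pmp transformations such that
`μ {x | S • x ⊆ G • x} > 1 - ε`. -/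
def HyperfiniteAction (Γ : Type*) {X : Type*} [Group Γ] [MulAction Γ X]
    [MeasurableSpace X] (μ : Measure X) : Prop :=
  ∀ (S : Finset Γ) (ε : ℝ), 0 < ε →
    ∃ (G : Type) (_ : Group G) (_ : Fintype G) (a : G → X → X),
      (∀ g : G, MeasurePreserving (a g) μ μ) ∧
      (∀ x : X, a 1 x = x) ∧ (∀ (g h : G) (x : X), a (g * h) x = a g (a h x)) ∧
      μ {x : X | ∀ s ∈ S, ∃ g : G, a g x = s • x} > ENNReal.ofReal (1 - ε)

/-!
If the action is hyperfinite, pick a finite group `G` whose orbits contain `S • x` for all `x`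
outside a set `Aᶜ` of small measure, and delete the Schreier edges touching `Aᶜ`. They have edge
measure at most `2 |S| μ(Aᶜ)`, and every remaining component lies in a `G`-orbit.

Conversely, apply hyperfiniteness to the Schreier graphing of `S ∪ S⁻¹`: after deleting a set `Z`
of edges of small measure, all components have at most `M` points. Order `X` by a Borel injection
into `ℝ` and let `T` move each point to the next point of its component, cyclically. Since `Γ` is
countable and components lie in orbits, `T` is a Borel bijection that acts on countably many Borel
pieces by elements of `Γ`, so it preserves `μ`; moreover `T^[M!] = id`, so `ℤ/M!` acts through the
powers of `T`. A point none of whose `S`-edges lies in `Z` has `S • x` in its `T`-orbit, and the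
remaining points have measure at most the edge measure of `Z`.
-/

open Function Set

section CyclicSucc

variable {α : Type*} [ConditionallyCompleteLinearOrder α] {B : Set α} {t u : α}

open Classical in
noncomputable def cyclicSucc (B : Set α) (t : α) : α :=
  if (B ∩ Ioi t).Nonempty then sInf (B ∩ Ioi t) else sInf B

lemma isLeast_csInf_of_finite (hB : B.Finite) (hne : B.Nonempty) : IsLeast B (sInf B) :=
  ⟨hne.csInf_mem hB, fun _ hb => csInf_le hB.bddBelow hb⟩

lemma isGreatest_csSup_of_finite (hB : B.Finite) (hne : B.Nonempty) : IsGreatest B (sSup B) :=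
  ⟨hne.csSup_mem hB, fun _ hb => le_csSup hB.bddAbove hb⟩

lemma cyclicSucc_mem (hB : B.Finite) (ht : t ∈ B) : cyclicSucc B t ∈ B := by
  unfold cyclicSucc
  split_ifs with h
  exacts [(h.csInf_mem (hB.subset inter_subset_left)).1, Set.Nonempty.csInf_mem ⟨t, ht⟩ hB]

lemma cyclicSucc_eq_iff (hB : B.Finite) (ht : t ∈ B) (hu : u ∈ B) :
    cyclicSucc B t = u ↔
      (t < u ∧ ∀ b ∈ B, t < b → u ≤ b) ∨ ((∀ b ∈ B, b ≤ t) ∧ ∀ b ∈ B, u ≤ b) := by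
  unfold cyclicSucc
  split_ifs with h
  · have hleast := isLeast_csInf_of_finite (hB.subset inter_subset_left) h
    obtain ⟨b, hb, htb⟩ := h
    rw [or_iff_left fun h' => not_le.2 htb (h'.1 b hb)]
    refine ⟨fun hu' => hu' ▸ ⟨hleast.1.2, fun b hb htb => hleast.2 ⟨hb, htb⟩⟩,
      fun ⟨htu, hmin⟩ => hleast.unique ⟨⟨hu, htu⟩, fun b hb => hmin b hb.1 hb.2⟩⟩
  · have hleast := isLeast_csInf_of_finite hB ⟨t, ht⟩
    have hmax : ∀ b ∈ B, b ≤ t := fun b hb => not_lt.1 fun htb => h ⟨b, hb, htb⟩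
    rw [or_iff_right fun h' => not_lt.2 (hmax u hu) h'.1]
    exact ⟨fun hu' => hu' ▸ ⟨hmax, fun b hb => hleast.2 hb⟩,
      fun ⟨_, hmin⟩ => hleast.unique ⟨hu, hmin⟩⟩

lemma cyclicSucc_of_isGreatest (hB : B.Finite) (ht : IsGreatest B t) :
    cyclicSucc B t = sInf B := by
  have hmin := isLeast_csInf_of_finite hB ⟨t, ht.1⟩
  exact (cyclicSucc_eq_iff hB ht.1 hmin.1).2 (Or.inr ⟨fun b hb => ht.2 hb, fun b hb => hmin.2 hb⟩)

lemma exists_iterate_cyclicSucc_eq_of_le (hB : B.Finite) (ht : t ∈ B) (hu : u ∈ B)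
    (htu : t ≤ u) : ∃ k, (cyclicSucc B)^[k] t = u := by
  revert htu
  refine (hB.wellFoundedOn (r := (· > ·))).induction ht
    (P := fun t => t ≤ u → ∃ k, (cyclicSucc B)^[k] t = u) fun t ht ih htu => ?_
  rcases htu.eq_or_lt with rfl | htu
  · exact ⟨0, rfl⟩
  have hs := cyclicSucc_mem hB ht
  obtain ⟨hts, hmin⟩ := ((cyclicSucc_eq_iff hB ht hs).1 rfl).resolve_right
    fun h => not_le.2 htu (h.1 u hu)
  obtain ⟨k, hk⟩ := ih _ hs hts (hmin u hu htu)
  exact ⟨k + 1, hk⟩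

lemma exists_iterate_cyclicSucc_eq (hB : B.Finite) (ht : t ∈ B) (hu : u ∈ B) :
    ∃ k, (cyclicSucc B)^[k] t = u := by
  have hmax := isGreatest_csSup_of_finite hB ⟨t, ht⟩
  have hmin := isLeast_csInf_of_finite hB ⟨t, ht⟩
  obtain ⟨k₁, hk₁⟩ := exists_iterate_cyclicSucc_eq_of_le hB ht hmax.1 (hmax.2 ht)
  obtain ⟨k₂, hk₂⟩ := exists_iterate_cyclicSucc_eq_of_le hB hmin.1 hu (hmin.2 hu)
  refine ⟨k₂ + (1 + k₁), ?_⟩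
  rw [iterate_add_apply, iterate_add_apply, hk₁, iterate_one, cyclicSucc_of_isGreatest hB hmax, hk₂]

end CyclicSucc

section CyclicSuccMap

variable {X β : Type*} [ConditionallyCompleteLinearOrder β]

noncomputable def cyclicSuccMap (f : X → β) (r : X → X → Prop) (x : X) : X :=
  haveI : Nonempty X := ⟨x⟩
  invFun f (cyclicSucc (f '' {y | r x y}) (f x))

variable {f : X → β} {r : X → X → Prop} (hf : Injective f) (hr : Equivalence r)
  (hfin : ∀ x, {y | r x y}.Finite)
include hf hr hfin

lemma cyclicSuccMap_spec (x : X) :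
    r x (cyclicSuccMap f r x) ∧
      f (cyclicSuccMap f r x) = cyclicSucc (f '' {y | r x y}) (f x) := by
  obtain ⟨y, hxy, hfy⟩ :=
    cyclicSucc_mem ((hfin x).image f) (mem_image_of_mem f (hr.refl x))
  have hinv : f (cyclicSuccMap f r x) = cyclicSucc (f '' {y | r x y}) (f x) :=
    haveI : Nonempty X := ⟨x⟩
    invFun_eq ⟨y, hfy⟩
  exact ⟨hf (hinv.trans hfy.symm) ▸ hxy, hinv⟩

lemma cyclicSuccMap_eq_iff {x y : X} :
    cyclicSuccMap f r x = y ↔ r x y ∧ f y = cyclicSucc (f '' {z | r x z}) (f x) := by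
  refine ⟨fun h => h ▸ cyclicSuccMap_spec hf hr hfin x, fun ⟨_, hfy⟩ => hf ?_⟩
  exact (cyclicSuccMap_spec hf hr hfin x).2.trans hfy.symm

lemma iterate_cyclicSuccMap (x : X) (k : ℕ) :
    r x ((cyclicSuccMap f r)^[k] x) ∧
      f ((cyclicSuccMap f r)^[k] x) = (cyclicSucc (f '' {y | r x y}))^[k] (f x) := by
  induction k with
  | zero => exact ⟨hr.refl x, rfl⟩
  | succ k ih =>
    obtain ⟨hrel, hval⟩ := cyclicSuccMap_spec hf hr hfin ((cyclicSuccMap f r)^[k] x)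
    have hclass : {z | r ((cyclicSuccMap f r)^[k] x) z} = {z | r x z} :=
      ext fun z => ⟨hr.trans ih.1, hr.trans (hr.symm ih.1)⟩
    rw [iterate_succ_apply', iterate_succ_apply', hval, hclass, ih.2]
    exact ⟨hr.trans ih.1 hrel, rfl⟩

lemma exists_iterate_cyclicSuccMap_eq {x y : X} (hxy : r x y) :
    ∃ k, (cyclicSuccMap f r)^[k] x = y := by
  obtain ⟨k, hk⟩ := exists_iterate_cyclicSucc_eq ((hfin x).image f)
    (mem_image_of_mem f (hr.refl x)) (mem_image_of_mem f hxy)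
  exact ⟨k, hf ((iterate_cyclicSuccMap hf hr hfin x k).2.trans hk)⟩

lemma iterate_cyclicSuccMap_factorial {M : ℕ} (hM : ∀ x, {y | r x y}.ncard ≤ M) (x : X) :
    (cyclicSuccMap f r)^[M.factorial] x = x := by
  have hper : x ∈ periodicPts (cyclicSuccMap f r) := by
    obtain ⟨k, hk⟩ :=
      exists_iterate_cyclicSuccMap_eq hf hr hfin (hr.symm (cyclicSuccMap_spec hf hr hfin x).1)
    exact ⟨k + 1, k.succ_pos, hk⟩
  have hle : minimalPeriod (cyclicSuccMap f r) x ≤ M :=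
    calc minimalPeriod (cyclicSuccMap f r) x
        = (Iio (minimalPeriod (cyclicSuccMap f r) x)).ncard := (ncard_Iio_nat _).symm
      _ ≤ {y | r x y}.ncard :=
        ncard_le_ncard_of_injOn _ (fun k _ => (iterate_cyclicSuccMap hf hr hfin x k).1)
          iterate_injOn_Iio_minimalPeriod (hfin x)
      _ ≤ M := hM x
  exact isPeriodicPt_iff_minimalPeriod_dvd.2
    (Nat.dvd_factorial (minimalPeriod_pos_of_mem_periodicPts hper) hle)

end CyclicSuccMap

section Components

variable {X : Type*} {E : Set (X × X)}

lemma equivalence_componentRel (hE : ∀ ⦃x y⦄, (x, y) ∈ E → (y, x) ∈ E) :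
    Equivalence (componentRel E) :=
  ⟨fun _ => .refl, fun h => by
    induction h with
    | refl => exact .refl
    | tail _ hbc ih => exact .head (hE hbc) ih, Relation.ReflTransGen.trans⟩

variable {Γ : Type*} [Group Γ] [MulAction Γ X]

lemma exists_smul_eq_of_componentRel (hE : ∀ ⦃x y⦄, (x, y) ∈ E → ∃ γ : Γ, y = γ • x) {x y : X}
    (h : componentRel E x y) : ∃ γ : Γ, y = γ • x := by
  induction h with
  | refl => exact ⟨1, (one_smul Γ x).symm⟩
  | tail _ hbc ih =>
    obtain ⟨γ, rfl⟩ := ih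
    obtain ⟨δ, rfl⟩ := hE hbc
    exact ⟨δ * γ, (mul_smul δ γ x).symm⟩

/-- Indexing paths by elements of `Γ` turns "`x` is joined to `γ • x`" into a countable union
of Borel conditions on `x`. -/
def reachableInSteps (E : Set (X × X)) : ℕ → Γ → Set X
  | 0, γ => {x | γ • x = x}
  | n + 1, γ => ⋃ δ, reachableInSteps E n δ ∩ {x | (δ • x, γ • x) ∈ E}

lemma componentRel_smul_iff (hE : ∀ ⦃x y⦄, (x, y) ∈ E → ∃ γ : Γ, y = γ • x) {x : X} {γ : Γ} :
    componentRel E x (γ • x) ↔ ∃ n, x ∈ reachableInSteps E n γ := by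
  constructor
  · intro h
    generalize hy : γ • x = y at h
    induction h generalizing γ with
    | refl => exact ⟨0, hy⟩
    | tail _ hbc ih =>
      obtain ⟨δ, rfl⟩ := hE hbc
      obtain ⟨n, hn⟩ := ih (γ := δ⁻¹ * γ) (by rw [mul_smul, hy, inv_smul_smul])
      refine ⟨n + 1, mem_iUnion.2 ⟨δ⁻¹ * γ, hn, ?_⟩⟩
      simpa [mul_smul, hy] using hbc
  · rintro ⟨n, hn⟩
    induction n generalizing γ with
    | zero => rw [show γ • x = x from hn]; exact .refl
    | succ n ih =>
      obtain ⟨δ, hδ, hedge⟩ := mem_iUnion.1 hn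
      exact (ih hδ).tail hedge

variable [MeasurableSpace X] [MeasurableEq X] [Countable Γ]
  (hsmul : ∀ γ : Γ, Measurable (γ • · : X → X)) (hEm : MeasurableSet E)
  (hE : ∀ ⦃x y⦄, (x, y) ∈ E → ∃ γ : Γ, y = γ • x)
include hsmul hEm hE

lemma measurable_componentRel_smul (γ : Γ) : Measurable fun x => componentRel E x (γ • x) := by
  have hreach : ∀ n (γ : Γ), MeasurableSet (reachableInSteps E n γ) := by
    intro n
    induction n with
    | zero => exact fun γ => measurableSet_eq_fun (hsmul γ) measurable_id
    | succ n ih =>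
      exact fun γ => .iUnion fun δ => (ih δ).inter (hEm.preimage ((hsmul δ).prodMk (hsmul γ)))
  simp_rw [componentRel_smul_iff hE]
  exact .exists fun n => (hreach n γ).mem

lemma measurable_forall_componentRel {p : X → X → Prop}
    (hp : ∀ δ : Γ, Measurable fun x => p x (δ • x)) :
    Measurable fun x => ∀ y, componentRel E x y → p x y := by
  have hiff : ∀ x, (∀ y, componentRel E x y → p x y) ↔
      ∀ δ : Γ, componentRel E x (δ • x) → p x (δ • x) := fun x =>
    ⟨fun h δ => h _, fun h y hxy => by
      obtain ⟨δ, rfl⟩ := exists_smul_eq_of_componentRel hE hxy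
      exact h δ hxy⟩
  simp_rw [hiff]
  exact .forall fun δ => (measurable_componentRel_smul hsmul hEm hE δ).imp (hp δ)

lemma measurable_cyclicSuccMap_eq_smul {f : X → ℝ} (hfm : Measurable f) (hf : Injective f)
    (hEsymm : ∀ ⦃x y⦄, (x, y) ∈ E → (y, x) ∈ E) (hfin : ∀ x, {y | componentRel E x y}.Finite)
    (γ : Γ) : Measurable fun x => cyclicSuccMap f (componentRel E) x = γ • x := by
  have hrel := equivalence_componentRel hEsymm
  have hiff : ∀ x, cyclicSuccMap f (componentRel E) x = γ • x ↔ componentRel E x (γ • x) ∧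
      ((f x < f (γ • x) ∧ ∀ y, componentRel E x y → f x < f y → f (γ • x) ≤ f y) ∨
        ((∀ y, componentRel E x y → f y ≤ f x) ∧ ∀ y, componentRel E x y → f (γ • x) ≤ f y)) := by
    intro x
    rw [cyclicSuccMap_eq_iff hf hrel hfin, and_congr_right_iff]
    intro hγ
    rw [eq_comm, cyclicSucc_eq_iff ((hfin x).image f) (mem_image_of_mem f (hrel.refl x))
      (mem_image_of_mem f hγ)]
    simp only [forall_mem_image, mem_ofPred_eq]
  simp_rw [hiff]
  have hfγ : ∀ δ : Γ, Measurable fun x => f (δ • x) := fun δ => hfm.comp (hsmul δ)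
  refine (measurable_componentRel_smul hsmul hEm hE γ).and (.or ?_ ?_)
  · exact (hfm.lt (hfγ γ)).and (measurable_forall_componentRel hsmul hEm hE fun δ =>
      (hfm.lt (hfγ δ)).imp ((hfγ γ).le' (hfγ δ)))
  · exact (measurable_forall_componentRel hsmul hEm hE fun δ => (hfγ δ).le' hfm).and
      (measurable_forall_componentRel hsmul hEm hE fun δ => (hfγ γ).le' (hfγ δ))

end Components

section PiecewiseTranslation

variable {Γ X : Type*} [Group Γ] [MulAction Γ X] [MeasurableSpace X] {μ : Measure X}
  {T : X → X}

lemma measurePreserving_of_pieces {ι : Type*} [Countable ι]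
    (hpmp : ∀ γ : Γ, MeasurePreserving (γ • · : X → X) μ μ) (hT : Bijective T)
    {D : ι → Set X} {e : ι → Γ} (hDm : ∀ i, MeasurableSet (D i))
    (hDdisj : Pairwise (Disjoint on D)) (hDcov : ⋃ i, D i = univ)
    (hDT : ∀ i, ∀ x ∈ D i, T x = e i • x) : MeasurePreserving T μ μ := by
  have hpre : ∀ A, T ⁻¹' A = ⋃ i, D i ∩ (e i • ·) ⁻¹' A := fun A => by
    ext x
    obtain ⟨i, hi⟩ := mem_iUnion.1 (hDcov.symm ▸ mem_univ x : x ∈ ⋃ i, D i)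
    simp only [mem_preimage, mem_iUnion, mem_inter_iff]
    exact ⟨fun hx => ⟨i, hi, hDT i x hi ▸ hx⟩, fun ⟨j, hj, hx⟩ => (hDT j x hj).symm ▸ hx⟩
  have himage : ∀ i, T '' D i = ((e i)⁻¹ • ·) ⁻¹' D i := fun i => by
    ext y
    refine ⟨?_, fun hy => ⟨_, hy, by rw [hDT i _ hy, smul_inv_smul]⟩⟩
    rintro ⟨x, hx, rfl⟩
    simpa [hDT i x hx] using hx
  have hTDm : ∀ i, MeasurableSet (T '' D i) := fun i =>
    himage i ▸ (hpmp (e i)⁻¹).measurable (hDm i)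
  have hmeas : Measurable T := fun A hA => by
    rw [hpre A]
    exact .iUnion fun i => (hDm i).inter ((hpmp (e i)).measurable hA)
  refine ⟨hmeas, Measure.ext fun A hA => ?_⟩
  have hsmulD : ∀ i, (e i • ·) ⁻¹' (T '' D i ∩ A) = D i ∩ (e i • ·) ⁻¹' A := fun i => by
    rw [preimage_inter, himage, ← preimage_comp]
    simp [comp_def]
  rw [Measure.map_apply hmeas hA]
  calc μ (T ⁻¹' A) = ∑' i, μ (D i ∩ (e i • ·) ⁻¹' A) := by
        rw [hpre A]
        exact measure_iUnion (fun i j hij => (hDdisj hij).mono inter_subset_left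
          inter_subset_left) fun i => (hDm i).inter ((hpmp (e i)).measurable hA)
    _ = ∑' i, μ (T '' D i ∩ A) := by
        congr 1 with i
        rw [← hsmulD, (hpmp (e i)).measure_preimage ((hTDm i).inter hA).nullMeasurableSet]
    _ = μ (⋃ i, T '' D i ∩ A) := by
        refine (measure_iUnion (fun i j hij => ?_) fun i => (hTDm i).inter hA).symm
        exact ((disjoint_image_iff hT.1).2 (hDdisj hij)).mono inter_subset_left inter_subset_left
    _ = μ A := by
        rw [← iUnion_inter, ← image_iUnion, hDcov, image_univ, hT.2.range_eq, univ_inter]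

lemma measurePreserving_of_forall_exists_smul [Countable Γ]
    (hpmp : ∀ γ : Γ, MeasurePreserving (γ • · : X → X) μ μ) (hT : Bijective T)
    (hpieces : ∀ γ : Γ, MeasurableSet {x | T x = γ • x}) (hcov : ∀ x, ∃ γ : Γ, T x = γ • x) :
    MeasurePreserving T μ μ := by
  obtain ⟨e, he⟩ := exists_surjective_nat Γ
  refine measurePreserving_of_pieces hpmp hT (e := e) (.disjointed fun n => hpieces (e n))
    (disjoint_disjointed _) ?_ fun n x hx => disjointed_subset _ n hx
  rw [iUnion_disjointed, eq_univ_iff_forall]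
  intro x
  obtain ⟨γ, hγ⟩ := hcov x
  obtain ⟨n, rfl⟩ := he γ
  exact mem_iUnion.2 ⟨n, hγ⟩

end PiecewiseTranslation

section EdgeMeasure

variable {Γ X : Type*} [Group Γ] [MulAction Γ X]

lemma schreierEdges_swap_mem {S : Set Γ} (hS : ∀ s ∈ S, s⁻¹ ∈ S) {x y : X}
    (h : (x, y) ∈ schreierEdges Γ S) : (y, x) ∈ schreierEdges Γ S := by
  obtain ⟨hne, s, hs, rfl : y = s • x⟩ := h
  exact ⟨hne.symm, s⁻¹, hS s hs, (inv_smul_smul s x).symm⟩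

variable [MeasurableSpace X] (μ : Measure X)

lemma measurableSet_schreierEdges [MeasurableEq X] (hsmul : ∀ γ : Γ, Measurable (γ • · : X → X))
    (S : Finset Γ) : MeasurableSet (schreierEdges Γ (X := X) (S : Set Γ)) := by
  have : schreierEdges Γ (X := X) (S : Set Γ) =
      {p | p.1 = p.2}ᶜ ∩ ⋃ s ∈ S, {p | p.2 = s • p.1} := by
    ext p
    simp [schreierEdges]
  rw [this]
  exact (measurableSet_eq_fun measurable_fst measurable_snd).compl.inter
    (S.measurableSet_biUnion fun s _ =>
      measurableSet_eq_fun measurable_snd ((hsmul s).comp measurable_fst))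

lemma measure_le_edgeMeasure {Z : Set (X × X)} {A : Set X} (hA : MeasurableSet A)
    (h : ∀ x ∈ A, ∃ y, (x, y) ∈ Z) : μ A ≤ edgeMeasure μ Z := by
  rw [← lintegral_indicator_one hA]
  refine lintegral_mono fun x => ?_
  by_cases hx : x ∈ A
  · obtain ⟨y, hy⟩ := h x hx
    rw [indicator_of_mem hx]
    exact ENNReal.le_tsum (⟨y, hy⟩ : {y // (x, y) ∈ Z})
  · rw [indicator_of_notMem hx]
    exact zero_le

lemma edgeMeasure_le_sum {S : Finset Γ} {Z : Set (X × X)} (hZ : Z ⊆ schreierEdges Γ (S : Set Γ))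
    (hZm : MeasurableSet Z) (hsmul : ∀ γ : Γ, Measurable (γ • · : X → X)) :
    edgeMeasure μ Z ≤ ∑ s ∈ S, μ {x | (x, s • x) ∈ Z} := by
  have hpre : ∀ s : Γ, MeasurableSet {x | (x, s • x) ∈ Z} := fun s =>
    hZm.preimage (measurable_id.prodMk (hsmul s))
  have hcount : ∀ x, ∑' _ : {y // (x, y) ∈ Z}, (1 : ℝ≥0∞) ≤
      ∑ s ∈ S, {x | (x, s • x) ∈ Z}.indicator 1 x := fun x => by
    classical
    have hsub : {y | (x, y) ∈ Z} ⊆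
        (· • x) '' ((S.filter fun s => (x, s • x) ∈ Z : Finset Γ) : Set Γ) := by
      rintro y hy
      obtain ⟨-, s, hs, rfl : y = s • x⟩ := hZ hy
      exact ⟨s, Finset.mem_filter.2 ⟨hs, hy⟩, rfl⟩
    calc ∑' _ : {y // (x, y) ∈ Z}, (1 : ℝ≥0∞) = ({y | (x, y) ∈ Z}.encard : ℝ≥0∞) :=
          ENNReal.tsum_set_one _
      _ ≤ ((S.filter fun s => (x, s • x) ∈ Z).card : ℝ≥0∞) := by
          rw [← ENat.toENNReal_coe, ENat.toENNReal_le, ← encard_coe_eq_coe_finsetCard]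
          exact (encard_le_encard hsub).trans (encard_image_le _ _)
      _ = ∑ s ∈ S, {x | (x, s • x) ∈ Z}.indicator 1 x := by
          simp [indicator_apply, Finset.sum_boole]
  calc edgeMeasure μ Z ≤ ∫⁻ x, ∑ s ∈ S, {x | (x, s • x) ∈ Z}.indicator 1 x ∂μ :=
        lintegral_mono hcount
    _ = ∑ s ∈ S, μ {x | (x, s • x) ∈ Z} := by
        rw [lintegral_finsetSum _ fun s _ => measurable_one.indicator (hpre s)]
        exact Finset.sum_congr rfl fun s _ => lintegral_indicator_one (hpre s)

end EdgeMeasure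

lemma bijective_of_iterate_eq_self {X : Type*} {T : X → X} {N : ℕ} (hN : N ≠ 0)
    (h : ∀ x, T^[N] x = x) : Bijective T := by
  obtain ⟨n, rfl⟩ := Nat.exists_eq_succ_of_ne_zero hN
  have hid : T^[n + 1] = id := funext h
  exact ⟨.of_comp (f := T^[n]) (by rw [← iterate_succ, hid]; exact injective_id),
    .of_comp (g := T^[n]) (by rw [← iterate_succ', hid]; exact surjective_id)⟩

section Probability

variable {X : Type*} [MeasurableSpace X] {μ : Measure X} [IsProbabilityMeasure μ] {A : Set X}
  {ε : ℝ}

lemma measure_compl_lt_ofReal (hA : MeasurableSet A) (h : ENNReal.ofReal (1 - ε) < μ A) :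
    μ Aᶜ < ENNReal.ofReal ε := by
  rw [prob_compl_eq_one_sub hA]
  refine ENNReal.sub_lt_of_lt_add prob_le_one ?_
  calc (1 : ℝ≥0∞) = ENNReal.ofReal (ε + (1 - ε)) := by simp
    _ ≤ ENNReal.ofReal ε + ENNReal.ofReal (1 - ε) := ENNReal.ofReal_add_le
    _ < ENNReal.ofReal ε + μ A := ENNReal.add_lt_add_left ENNReal.ofReal_ne_top h

lemma ofReal_lt_measure_compl (hA : MeasurableSet A) (hε : ε ≤ 1) (h : μ A < ENNReal.ofReal ε) :
    ENNReal.ofReal (1 - ε) < μ Aᶜ := by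
  have hε₀ : 0 < ε := ENNReal.ofReal_pos.1 (zero_le.trans_lt h)
  rw [prob_compl_eq_one_sub hA, lt_tsub_iff_right]
  calc ENNReal.ofReal (1 - ε) + μ A < ENNReal.ofReal (1 - ε) + ENNReal.ofReal ε :=
        ENNReal.add_lt_add_left ENNReal.ofReal_ne_top h
    _ = 1 := by rw [← ENNReal.ofReal_add (by linarith) hε₀.le, sub_add_cancel, ENNReal.ofReal_one]

end Probability

lemma exists_finite_group_action_of_periodic {X : Type*} [MeasurableSpace X] {μ : Measure X}
    {T : X → X} (hT : MeasurePreserving T μ μ) {N : ℕ} (hN : N ≠ 0) (hTN : ∀ x, T^[N] x = x) :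
    ∃ (G : Type) (_ : Group G) (_ : Fintype G) (a : G → X → X),
      (∀ g : G, MeasurePreserving (a g) μ μ) ∧ (∀ x, a 1 x = x) ∧
      (∀ g h x, a (g * h) x = a g (a h x)) ∧ ∀ k x, ∃ g, a g x = T^[k] x := by
  have : NeZero N := ⟨hN⟩
  refine ⟨Multiplicative (ZMod N), inferInstance, inferInstance,
    fun g => T^[(Multiplicative.toAdd g).val], fun g => hT.iterate _, fun x => by simp,
    fun g h x => ?_, fun k x => ⟨.ofAdd k, ?_⟩⟩
  · dsimp only
    rw [toAdd_mul, ZMod.val_add, IsPeriodicPt.iterate_mod_apply (hTN x), iterate_add_apply]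
  · dsimp only
    rw [toAdd_ofAdd, ZMod.val_natCast, IsPeriodicPt.iterate_mod_apply (hTN x)]

section Hyperfinite

lemma component_finite_and_ncard_le_card {X G : Type*} [Group G] [Fintype G] {a : G → X → X}
    (ha1 : ∀ x, a 1 x = x) (hmul : ∀ g h x, a (g * h) x = a g (a h x)) {E : Set (X × X)}
    (hE : ∀ ⦃x y⦄, (x, y) ∈ E → ∃ g, y = a g x) (x : X) :
    {y | componentRel E x y}.Finite ∧ {y | componentRel E x y}.ncard ≤ Fintype.card G := by
  let _ : MulAction G X := { smul := a, one_smul := ha1, mul_smul := hmul }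
  have hsub : {y | componentRel E x y} ⊆ (a · x) '' univ := fun y hy => by
    obtain ⟨g, rfl⟩ := exists_smul_eq_of_componentRel hE hy
    exact ⟨g, mem_univ g, rfl⟩
  refine ⟨(finite_univ.image _).subset hsub, (ncard_le_ncard hsub (finite_univ.image _)).trans ?_⟩
  exact (ncard_image_le finite_univ).trans (ncard_univ G ▸ Nat.card_eq_fintype_card.le)

variable {Γ X : Type*} [Group Γ] [MulAction Γ X] [MeasurableSpace X] {μ : Measure X}

lemma edgeMeasure_boundary_le [MeasurableEq X]
    (hpmp : ∀ γ : Γ, MeasurePreserving (γ • · : X → X) μ μ) (S : Finset Γ) {A : Set X}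
    (hA : MeasurableSet A) :
    edgeMeasure μ (schreierEdges Γ (S : Set Γ) ∩ {p | p.1 ∉ A ∨ p.2 ∉ A}) ≤
      2 * S.card * μ Aᶜ := by
  have hsmul : ∀ γ : Γ, Measurable (γ • · : X → X) := fun γ => (hpmp γ).measurable
  have hZm : MeasurableSet (schreierEdges Γ (S : Set Γ) ∩ {p : X × X | p.1 ∉ A ∨ p.2 ∉ A}) :=
    (measurableSet_schreierEdges hsmul S).inter
      ((hA.compl.preimage measurable_fst).union (hA.compl.preimage measurable_snd))
  calc _ ≤ ∑ s ∈ S, μ {x | (x, s • x) ∈ schreierEdges Γ (S : Set Γ) ∩ {p | p.1 ∉ A ∨ p.2 ∉ A}} :=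
        edgeMeasure_le_sum μ inter_subset_left hZm hsmul
    _ ≤ ∑ _s ∈ S, 2 * μ Aᶜ := Finset.sum_le_sum fun s _ => calc
        _ ≤ μ (Aᶜ ∪ (s • ·) ⁻¹' Aᶜ) := measure_mono fun x hx => hx.2
        _ ≤ μ Aᶜ + μ ((s • ·) ⁻¹' Aᶜ) := measure_union_le _ _
        _ = 2 * μ Aᶜ := by rw [(hpmp s).measure_preimage hA.compl.nullMeasurableSet, two_mul]
    _ = 2 * S.card * μ Aᶜ := by rw [Finset.sum_const, nsmul_eq_mul]; ring

lemma hyperfiniteGraphing_schreierEdges [MeasurableEq X] [IsProbabilityMeasure μ]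
    (hpmp : ∀ γ : Γ, MeasurePreserving (γ • · : X → X) μ μ) (h : HyperfiniteAction Γ μ)
    {S : Finset Γ} (hS : ∀ s ∈ S, s⁻¹ ∈ S) :
    HyperfiniteGraphing μ (schreierEdges Γ (S : Set Γ)) := by
  intro ε hε
  set k : ℕ := 2 * S.card + 1
  obtain ⟨G, _, _, a, ha, ha1, hmul, hA⟩ := h S (ε / k) (by positivity)
  set A := {x | ∀ s ∈ S, ∃ g : G, a g x = s • x}
  have hAm : MeasurableSet A := by
    simp only [A, ofPred_forall]
    exact S.measurableSet_biInter fun s _ =>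
      (Measurable.exists fun g => .eq (ha g).measurable (hpmp s).measurable).setOf
  have hAc : μ Aᶜ < ENNReal.ofReal (ε / k) := measure_compl_lt_ofReal hAm hA
  refine ⟨Fintype.card G, schreierEdges Γ (S : Set Γ) ∩ {p | p.1 ∉ A ∨ p.2 ∉ A},
    inter_subset_left, (measurableSet_schreierEdges (fun γ => (hpmp γ).measurable) S).inter
      ((hAm.compl.preimage measurable_fst).union (hAm.compl.preimage measurable_snd)),
    fun p hp => ⟨schreierEdges_swap_mem hS hp.1, hp.2.symm⟩, ?_, ?_⟩
  · calc _ ≤ 2 * S.card * μ Aᶜ := edgeMeasure_boundary_le hpmp S hAm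
      _ ≤ k * μ Aᶜ := by gcongr; norm_cast; omega
      _ < k * ENNReal.ofReal (ε / k) :=
        (ENNReal.mul_lt_mul_iff_right (by positivity) (ENNReal.natCast_ne_top k)).2 hAc
      _ = ENNReal.ofReal ε := by
        rw [← ENNReal.ofReal_natCast, ← ENNReal.ofReal_mul (by positivity),
          mul_div_cancel₀ _ (by positivity)]
  · refine component_finite_and_ncard_le_card ha1 hmul fun x y hxy => ?_
    obtain ⟨hE, hZ⟩ := hxy
    have hx : x ∈ A := by_contra fun hx => hZ ⟨hE, .inl hx⟩
    obtain ⟨-, s, hs, rfl : y = s • x⟩ := hE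
    obtain ⟨g, hg⟩ := hx s hs
    exact ⟨g, hg.symm⟩

lemma exists_periodic_measurePreserving_of_components [Countable Γ] [StandardBorelSpace X]
    (hpmp : ∀ γ : Γ, MeasurePreserving (γ • · : X → X) μ μ) {E : Set (X × X)}
    (hEm : MeasurableSet E) (hEsymm : ∀ ⦃x y⦄, (x, y) ∈ E → (y, x) ∈ E)
    (hEorb : ∀ ⦃x y⦄, (x, y) ∈ E → ∃ γ : Γ, y = γ • x) {M : ℕ}
    (hcomp : ∀ x, {y | componentRel E x y}.Finite ∧ {y | componentRel E x y}.ncard ≤ M) :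
    ∃ T : X → X, MeasurePreserving T μ μ ∧ (∀ x, T^[M.factorial] x = x) ∧
      ∀ ⦃x y⦄, componentRel E x y → ∃ k, T^[k] x = y := by
  obtain ⟨f, hf⟩ := exists_measurableEmbedding_real X
  have hrel := equivalence_componentRel hEsymm
  have hfin : ∀ x, {y | componentRel E x y}.Finite := fun x => (hcomp x).1
  have hTN := iterate_cyclicSuccMap_factorial hf.injective hrel hfin fun x => (hcomp x).2
  refine ⟨cyclicSuccMap f (componentRel E), ?_, hTN,
    fun x y => exists_iterate_cyclicSuccMap_eq hf.injective hrel hfin⟩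
  exact measurePreserving_of_forall_exists_smul hpmp
    (bijective_of_iterate_eq_self M.factorial_pos.ne' hTN)
    (fun γ => (measurable_cyclicSuccMap_eq_smul (fun γ => (hpmp γ).measurable) hEm hEorb
      hf.measurable hf.injective hEsymm hfin γ).setOf)
    fun x => exists_smul_eq_of_componentRel hEorb (cyclicSuccMap_spec hf.injective hrel hfin x).1

lemma hyperfiniteAction_of_hyperfiniteGraphing [Countable Γ] [StandardBorelSpace X]
    [IsProbabilityMeasure μ] (hpmp : ∀ γ : Γ, MeasurePreserving (γ • · : X → X) μ μ)
    (h : ∀ S : Finset Γ, (∀ s ∈ S, s⁻¹ ∈ S) →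
      HyperfiniteGraphing μ (schreierEdges Γ (S : Set Γ))) :
    HyperfiniteAction Γ μ := by
  classical
  intro S ε hε
  have hsmul : ∀ γ : Γ, Measurable (γ • · : X → X) := fun γ => (hpmp γ).measurable
  have hS : ∀ s ∈ S ∪ S⁻¹, s⁻¹ ∈ S ∪ S⁻¹ := fun s => by
    simp only [Finset.mem_union, Finset.mem_inv', inv_inv]; exact Or.symm
  obtain ⟨M, Z, -, hZm, hZsymm, hZε, hcomp⟩ := h _ hS (min ε 1) (lt_min hε one_pos)
  set E := schreierEdges Γ (X := X) ↑(S ∪ S⁻¹) \ Z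
  obtain ⟨T, hT, hTN, hreach⟩ := exists_periodic_measurePreserving_of_components hpmp
    (E := E) ((measurableSet_schreierEdges hsmul _).diff hZm)
    (fun x y hxy => ⟨schreierEdges_swap_mem (by simpa using hS) hxy.1,
      fun hZ => hxy.2 (hZsymm _ hZ)⟩)
    (fun x y hxy => let ⟨_, s, _, hs⟩ := hxy.1; ⟨s, hs⟩) hcomp
  obtain ⟨G, _, _, a, ha, ha1, hmul, hiter⟩ :=
    exists_finite_group_action_of_periodic hT M.factorial_pos.ne' hTN
  refine ⟨G, ‹_›, ‹_›, a, ha, ha1, hmul, ?_⟩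
  set bad := {x | ∃ s ∈ S, (x, s • x) ∈ Z}
  have hbad : MeasurableSet bad := (Measurable.exists fun s =>
    measurable_const.and (hZm.mem.comp (measurable_id.prodMk (hsmul s)))).setOf
  have hgood : badᶜ ⊆ {x | ∀ s ∈ S, ∃ g, a g x = s • x} := fun x hx s hs => by
    have hxs : componentRel E x (s • x) := by
      by_cases hfix : s • x = x
      · rw [hfix]; exact .refl
      · exact .single ⟨⟨Ne.symm hfix, s, by simp [hs], rfl⟩, fun hZ => hx ⟨s, hs, hZ⟩⟩
    obtain ⟨k, hk⟩ := hreach hxs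
    obtain ⟨g, hg⟩ := hiter k x
    exact ⟨g, hg.trans hk⟩
  calc ENNReal.ofReal (1 - ε) ≤ ENNReal.ofReal (1 - min ε 1) :=
        ENNReal.ofReal_le_ofReal (by linarith [min_le_left ε 1])
    _ < μ badᶜ := ofReal_lt_measure_compl hbad (min_le_right _ _)
        ((measure_le_edgeMeasure μ hbad fun x ⟨_, _, hx⟩ => ⟨_, hx⟩).trans_lt hZε)
    _ ≤ _ := measure_mono hgood

end Hyperfinite

/-- A pmp action of a countable group `Γ` on a standard probability space
is hyperfinite iff for every finite symmetric `S ⊆ Γ` the Schreier graphing `G_{α,S}` is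
hyperfinite as a graphing. -/
theorem stmt8 {Γ X : Type*} [Group Γ] [Countable Γ] [MulAction Γ X]
    [MeasurableSpace X] [StandardBorelSpace X] (μ : Measure X) [IsProbabilityMeasure μ]
    (hpmp : ∀ γ : Γ, MeasurePreserving (fun x : X => γ • x) μ μ) :
    HyperfiniteAction Γ μ ↔
      ∀ S : Finset Γ, (∀ s ∈ S, s⁻¹ ∈ S) →
        HyperfiniteGraphing μ (schreierEdges Γ (S : Set Γ)) :=
  ⟨fun h _ hS => hyperfiniteGraphing_schreierEdges hpmp h hS,
    hyperfiniteAction_of_hyperfiniteGraphing hpmp⟩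
end

section
/- Let Γ be a countable group, θ an IRS on Γ, and let α and β be pmp actions of Γ on standard probability spaces (X,μ) and (Y,ν), both with IRS θ. Let ζ = α ×_θ β be the relative independent joining over the conjugation action Γ ↷ (Sub(Γ), θ), formed using the factor maps Stab^α and Stab^β. Then ζ has IRS θ, and both α and β are factors of ζ. -/
open MeasureTheory
open scoped ENNReal

/-! For `η = ∫ μ_s × ν_s dθ(s)`, the stabilizer of a pair is the intersection of the
stabilizers of its coordinates, and `μ_s × ν_s` is concentrated on pairs whose coordinates
both have stabilizer `s`; so the stabilizer map pushes `μ_s × ν_s` to `δ_s` and `η` to `θ`.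
The marginals of `μ_s × ν_s` are `μ_s` and `ν_s`, which integrate to `μ` and `ν`. -/

theorem MulAction.stabilizer_prod {Γ X Y : Type*} [Group Γ] [MulAction Γ X] [MulAction Γ Y]
    (p : X × Y) :
    stabilizer Γ p = stabilizer Γ p.1 ⊓ stabilizer Γ p.2 := by
  ext γ
  simp [mem_stabilizer_iff, Prod.ext_iff]

theorem MeasureTheory.Measure.ae_stabilizer_prod_eq {Γ X Y : Type*} [Group Γ]
    [MulAction Γ X] [MulAction Γ Y] [MeasurableSpace X] [MeasurableSpace Y]
    {μ : Measure X} {ν : Measure Y} {s : Subgroup Γ}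
    (hμ : ∀ᵐ x ∂μ, MulAction.stabilizer Γ x = s) (hν : ∀ᵐ y ∂ν, MulAction.stabilizer Γ y = s) :
    ∀ᵐ p ∂μ.prod ν, MulAction.stabilizer Γ p = s := by
  filter_upwards [quasiMeasurePreserving_fst.ae hμ, quasiMeasurePreserving_snd.ae hν]
    with p hp₁ hp₂
  rw [MulAction.stabilizer_prod, hp₁, hp₂, inf_idem]

theorem MeasureTheory.Measure.map_eq_dirac_of_ae_eq {α β : Type*} [MeasurableSpace α]
    [MeasurableSpace β] {μ : Measure α} [IsProbabilityMeasure μ] {f : α → β} {b : β}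
    (h : ∀ᵐ a ∂μ, f a = b) :
    μ.map f = dirac b := by
  rw [map_congr h, map_const, measure_univ, one_smul]

theorem MeasureTheory.Measure.map_eq_of_forall_apply_eq_lintegral {α β T : Type*}
    [MeasurableSpace α] [MeasurableSpace β] [MeasurableSpace T] {θ : Measure T}
    {η : Measure α} {κ : T → Measure α} {ρ : Measure β} {ρs : T → Measure β} {f : α → β}
    (hf : Measurable f) (hη : ∀ C, MeasurableSet C → η C = ∫⁻ t, κ t C ∂θ)
    (hρ : ∀ B, MeasurableSet B → ρ B = ∫⁻ t, ρs t B ∂θ) (hmap : ∀ᵐ t ∂θ, (κ t).map f = ρs t) :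
    η.map f = ρ := by
  ext B hB
  rw [map_apply hf hB, hη _ (hf hB), hρ B hB]
  refine lintegral_congr_ae ?_
  filter_upwards [hmap] with t ht
  rw [← ht, map_apply hf hB]

theorem MeasureTheory.Measure.apply_eq_lintegral_dirac {T : Type*} [MeasurableSpace T]
    (θ : Measure T) {B : Set T} (hB : MeasurableSet B) :
    θ B = ∫⁻ t, dirac t B ∂θ := by
  simp_rw [dirac_apply' _ hB, lintegral_indicator_one hB]

theorem stmt9_general {Γ X Y : Type*} [Group Γ]
    [MeasurableSpace X] [MeasurableSpace Y]
    [MulAction Γ X] [MulAction Γ Y]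
    (μ : Measure X) (ν : Measure Y)
    (θ : Measure (Subgroup Γ))
    (hmXY : Measurable (fun p : X × Y => MulAction.stabilizer Γ p))
    -- disintegrations of μ and ν over θ via the stabilizer maps
    (μs : Subgroup Γ → Measure X) (νs : Subgroup Γ → Measure Y)
    (hprobX : ∀ᵐ s ∂θ, IsProbabilityMeasure (μs s))
    (hprobY : ∀ᵐ s ∂θ, IsProbabilityMeasure (νs s))
    (hdisX : ∀ A : Set X, MeasurableSet A → μ A = ∫⁻ s, μs s A ∂θ)
    (hdisY : ∀ B : Set Y, MeasurableSet B → ν B = ∫⁻ s, νs s B ∂θ)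
    (hconcX : ∀ᵐ s ∂θ, μs s {x : X | MulAction.stabilizer Γ x ≠ s} = 0)
    (hconcY : ∀ᵐ s ∂θ, νs s {y : Y | MulAction.stabilizer Γ y ≠ s} = 0)
    -- the relative independent joining η = ∫ μ_s × ν_s dθ(s)
    (η : Measure (X × Y))
    (hη : ∀ C : Set (X × Y), MeasurableSet C →
        η C = ∫⁻ s, ((μs s).prod (νs s)) C ∂θ) :
    Measure.map (fun p : X × Y => MulAction.stabilizer Γ p) η = θ ∧
    Measure.map (Prod.fst : X × Y → X) η = μ ∧
    Measure.map (Prod.snd : X × Y → Y) η = ν ∧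
    (∀ (γ : Γ) (p : X × Y), γ • p = (γ • p.1, γ • p.2)) := by
  refine ⟨?_, ?_, ?_, fun _ _ => rfl⟩
  · refine Measure.map_eq_of_forall_apply_eq_lintegral hmXY hη
      (fun _ hB => θ.apply_eq_lintegral_dirac hB) ?_
    filter_upwards [hprobX, hprobY, hconcX, hconcY] with s _ _ hX hY
    exact Measure.map_eq_dirac_of_ae_eq
      (Measure.ae_stabilizer_prod_eq (ae_iff.2 hX) (ae_iff.2 hY))
  · refine Measure.map_eq_of_forall_apply_eq_lintegral measurable_fst hη hdisX ?_
    filter_upwards [hprobY] with s _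
    rw [Measure.map_fst_prod, measure_univ, one_smul]
  · refine Measure.map_eq_of_forall_apply_eq_lintegral measurable_snd hη hdisY ?_
    filter_upwards [hprobX, hprobY] with s _ _
    rw [Measure.map_snd_prod, measure_univ, one_smul]

/-- Let `θ` be an IRS on a countable group `Γ` and `α`, `β` pmp actions of
`Γ` on `(X,μ)` and `(Y,ν)` with IRS `θ`. Form the relative independent joining
`ζ = α ×_θ β` over the conjugation action on `(Sub(Γ), θ)`, using disintegrations of `μ`
and `ν` over `θ` via the stabilizer maps: `η = ∫ μ_s × ν_s dθ(s)`. Then `ζ` has IRS `θ`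
and both `α` and `β` are factors of `ζ` (via the coordinate projections, which are
automatically `Γ`-equivariant for the diagonal action). -/
theorem stmt9 {Γ X Y : Type*} [Group Γ] [Countable Γ]
    [MeasurableSpace X] [StandardBorelSpace X] [MeasurableSpace Y] [StandardBorelSpace Y]
    [MulAction Γ X] [MulAction Γ Y]
    (μ : Measure X) (ν : Measure Y) [IsProbabilityMeasure μ] [IsProbabilityMeasure ν]
    (θ : Measure (Subgroup Γ)) [IsProbabilityMeasure θ]
    -- θ is an invariant random subgroup
    (hconj : ∀ γ : Γ, Measure.map
        (fun H : Subgroup Γ => Subgroup.map (MulAut.conj γ).toMonoidHom H) θ = θ)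
    -- α and β are pmp actions with IRS θ
    (hpmpX : ∀ γ : Γ, MeasurePreserving (fun x : X => γ • x) μ μ)
    (hpmpY : ∀ γ : Γ, MeasurePreserving (fun y : Y => γ • y) ν ν)
    (hmX : Measurable (fun x : X => MulAction.stabilizer Γ x))
    (hmY : Measurable (fun y : Y => MulAction.stabilizer Γ y))
    (hmXY : Measurable (fun p : X × Y => MulAction.stabilizer Γ p))
    (hirsX : Measure.map (fun x : X => MulAction.stabilizer Γ x) μ = θ)
    (hirsY : Measure.map (fun y : Y => MulAction.stabilizer Γ y) ν = θ)
    -- disintegrations of μ and ν over θ via the stabilizer maps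
    (μs : Subgroup Γ → Measure X) (νs : Subgroup Γ → Measure Y)
    (hprobX : ∀ᵐ s ∂θ, IsProbabilityMeasure (μs s))
    (hprobY : ∀ᵐ s ∂θ, IsProbabilityMeasure (νs s))
    (hdisX : ∀ A : Set X, MeasurableSet A → μ A = ∫⁻ s, μs s A ∂θ)
    (hdisY : ∀ B : Set Y, MeasurableSet B → ν B = ∫⁻ s, νs s B ∂θ)
    (hconcX : ∀ᵐ s ∂θ, μs s {x : X | MulAction.stabilizer Γ x ≠ s} = 0)
    (hconcY : ∀ᵐ s ∂θ, νs s {y : Y | MulAction.stabilizer Γ y ≠ s} = 0)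
    -- the relative independent joining η = ∫ μ_s × ν_s dθ(s)
    (η : Measure (X × Y))
    (hη : ∀ C : Set (X × Y), MeasurableSet C →
        η C = ∫⁻ s, ((μs s).prod (νs s)) C ∂θ) :
    Measure.map (fun p : X × Y => MulAction.stabilizer Γ p) η = θ ∧
    Measure.map (Prod.fst : X × Y → X) η = μ ∧
    Measure.map (Prod.snd : X × Y → Y) η = ν ∧
    (∀ (γ : Γ) (p : X × Y), γ • p = (γ • p.1, γ • p.2)) :=
  stmt9_general μ ν θ hmXY μs νs hprobX hprobY hdisX hdisY hconcX hconcY η hη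
end

section
/- Every measure algebra is Dedekind complete as a Boolean algebra: every subset admits a supremum and an infimum. -/
/-!
A sup-closed set `T` is a net indexed by itself. Along it `μ` increases to `sup μ(T) < ∞`,
and for `t ≤ t'` the distance `d(t, t') = μ t' - μ t`, so the net is Cauchy and converges
to some `x`. In a measure algebra the order intervals `Ici a`, `Iic b` are closed, hence `x`
lies above every element of `T` and below every upper bound of `T`. Taking `T` the finite
joins of `s` gives `sup s`, and `inf s = sup (lowerBounds s)`.
-/

open scoped symmDiff

open Filter Set

namespace MeasureAlgebra

variable {A : Type*} [BooleanAlgebra A] {μ : A → ℝ} {a b : A}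

theorem measure_eq_add_sdiff (hadd : ∀ a b : A, a ⊓ b = ⊥ → μ (a ⊔ b) = μ a + μ b)
    (h : a ≤ b) : μ b = μ a + μ (b \ a) := by
  rw [← hadd a (b \ a) (disjoint_iff.mp disjoint_sdiff_self_right), sup_sdiff_cancel_right h]

theorem measure_mono (hμ0 : ∀ a : A, 0 ≤ μ a)
    (hadd : ∀ a b : A, a ⊓ b = ⊥ → μ (a ⊔ b) = μ a + μ b) : Monotone μ := fun a b h => by
  linarith [measure_eq_add_sdiff hadd h, hμ0 (b \ a)]

variable [MetricSpace A]

theorem le_of_measure_sdiff_eq_zero (hdist : ∀ a b : A, dist a b = μ (a ∆ b))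
    (h : μ (a \ b) = 0) : a ≤ b := by
  rw [← sdiff_eq_bot_iff, ← dist_eq_zero, hdist, symmDiff_bot, h]

theorem measure_sdiff_le_dist (hμ0 : ∀ a : A, 0 ≤ μ a)
    (hadd : ∀ a b : A, a ⊓ b = ⊥ → μ (a ⊔ b) = μ a + μ b)
    (hdist : ∀ a b : A, dist a b = μ (a ∆ b)) (a b : A) : μ (a \ b) ≤ dist a b :=
  hdist a b ▸ measure_mono hμ0 hadd le_sup_left

theorem dist_eq_sub_of_le (hadd : ∀ a b : A, a ⊓ b = ⊥ → μ (a ⊔ b) = μ a + μ b)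
    (hdist : ∀ a b : A, dist a b = μ (a ∆ b)) (h : a ≤ b) : dist a b = μ b - μ a := by
  rw [hdist, symmDiff_of_le h, measure_eq_add_sdiff hadd h]
  ring

theorem isClosed_Ici (hμ0 : ∀ a : A, 0 ≤ μ a)
    (hadd : ∀ a b : A, a ⊓ b = ⊥ → μ (a ⊔ b) = μ a + μ b)
    (hdist : ∀ a b : A, dist a b = μ (a ∆ b)) (a : A) : IsClosed (Ici a) := by
  refine isClosed_of_closure_subset fun x hx => le_of_measure_sdiff_eq_zero hdist ?_
  refine le_antisymm (le_of_forall_pos_lt_add fun ε hε => ?_) (hμ0 _)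
  obtain ⟨b, hab, hxb⟩ := Metric.mem_closure_iff.mp hx ε hε
  calc μ (a \ x) ≤ μ (b \ x) := measure_mono hμ0 hadd (sdiff_le_sdiff_right hab)
    _ ≤ dist b x := measure_sdiff_le_dist hμ0 hadd hdist b x
    _ < 0 + ε := by rwa [dist_comm, zero_add]

theorem isClosed_Iic (hμ0 : ∀ a : A, 0 ≤ μ a)
    (hadd : ∀ a b : A, a ⊓ b = ⊥ → μ (a ⊔ b) = μ a + μ b)
    (hdist : ∀ a b : A, dist a b = μ (a ∆ b)) (b : A) : IsClosed (Iic b) := by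
  refine isClosed_of_closure_subset fun x hx => le_of_measure_sdiff_eq_zero hdist ?_
  refine le_antisymm (le_of_forall_pos_lt_add fun ε hε => ?_) (hμ0 _)
  obtain ⟨a, hab, hxa⟩ := Metric.mem_closure_iff.mp hx ε hε
  calc μ (x \ b) ≤ μ (x \ a) := measure_mono hμ0 hadd (sdiff_le_sdiff_left hab)
    _ ≤ dist x a := measure_sdiff_le_dist hμ0 hadd hdist x a
    _ < 0 + ε := by rwa [zero_add]

theorem exists_isLUB_of_supClosed [CompleteSpace A] (hμ0 : ∀ a : A, 0 ≤ μ a)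
    (hadd : ∀ a b : A, a ⊓ b = ⊥ → μ (a ⊔ b) = μ a + μ b)
    (hdist : ∀ a b : A, dist a b = μ (a ∆ b)) {T : Set A} (hT : SupClosed T)
    (hne : T.Nonempty) : ∃ x, IsLUB T x := by
  let _ : SemilatticeSup T := Subtype.semilatticeSup fun _ _ ha hb => hT ha hb
  have : Nonempty T := hne.to_subtype
  have hbdd : BddAbove (μ '' T) := ⟨μ ⊤, by
    rintro _ ⟨t, -, rfl⟩
    exact measure_mono hμ0 hadd le_top⟩
  have hcauchy : CauchySeq ((↑) : T → A) := by
    refine Metric.cauchySeq_iff'.mpr fun ε hε => ?_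
    obtain ⟨_, ⟨t, ht, rfl⟩, hlt⟩ :=
      exists_lt_of_lt_csSup (hne.image μ) (sub_lt_self (sSup (μ '' T)) hε)
    refine ⟨⟨t, ht⟩, fun u (hu : t ≤ u) => ?_⟩
    rw [dist_comm, dist_eq_sub_of_le hadd hdist hu]
    linarith [le_csSup hbdd (mem_image_of_mem μ u.2)]
  obtain ⟨x, hx⟩ := cauchySeq_tendsto_of_complete hcauchy
  exact ⟨x, fun a ha => (isClosed_Ici hμ0 hadd hdist a).mem_of_tendsto hx
      (eventually_ge_atTop (⟨a, ha⟩ : T)),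
    fun b hb => (isClosed_Iic hμ0 hadd hdist b).mem_of_tendsto hx
      (Eventually.of_forall fun t => hb t.2)⟩

theorem exists_isLUB [CompleteSpace A] (hμ0 : ∀ a : A, 0 ≤ μ a)
    (hadd : ∀ a b : A, a ⊓ b = ⊥ → μ (a ⊔ b) = μ a + μ b)
    (hdist : ∀ a b : A, dist a b = μ (a ∆ b)) (s : Set A) : ∃ x, IsLUB s x := by
  obtain rfl | hs := s.eq_empty_or_nonempty
  · exact ⟨⊥, isLUB_empty⟩
  obtain ⟨x, hx⟩ := exists_isLUB_of_supClosed hμ0 hadd hdist supClosed_supClosure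
    (hs.mono subset_supClosure)
  exact ⟨x, isLUB_supClosure.mp hx⟩

end MeasureAlgebra

open MeasureAlgebra in
theorem stmt12_general {A : Type*} [BooleanAlgebra A] [MetricSpace A] [CompleteSpace A]
    (μ : A → ℝ) (hμ0 : ∀ a : A, 0 ≤ μ a)
    (hadd : ∀ a b : A, a ⊓ b = ⊥ → μ (a ⊔ b) = μ a + μ b)
    (hdist : ∀ a b : A, dist a b = μ (a ∆ b)) :
    ∀ s : Set A, (∃ x : A, IsLUB s x) ∧ (∃ x : A, IsGLB s x) := fun s =>
  ⟨exists_isLUB hμ0 hadd hdist s,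
    (exists_isLUB hμ0 hadd hdist (lowerBounds s)).imp fun _ => isLUB_lowerBounds.mp⟩

/-- Every measure algebra is Dedekind complete as a Boolean algebra:
every subset admits a supremum and an infimum. -/
theorem stmt12 {A : Type*} [BooleanAlgebra A] [MetricSpace A] [CompleteSpace A]
    (μ : A → ℝ) (hμ1 : μ ⊤ = 1) (hμ0 : ∀ a : A, 0 ≤ μ a)
    (hadd : ∀ a b : A, a ⊓ b = ⊥ → μ (a ⊔ b) = μ a + μ b)
    (hdist : ∀ a b : A, dist a b = μ (a ∆ b)) :
    ∀ s : Set A, (∃ x : A, IsLUB s x) ∧ (∃ x : A, IsGLB s x) :=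
  stmt12_general μ hμ0 hadd hdist
end
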